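/- arXiv:1501.03669 — 4 statements merged into one kernel-verified Lean document; each statement's English description precedes it below -/
import Mathlib

section
/- (Proposition 1.) Let K ≥ 1, λ > 0, and r ∈ ℝ^K, and define h : ℝ^K → ℝ by h(y) = max_{1≤k≤K} (y^(k) + r^(k)). Then for every y ∈ ℝ^K, the proximity operator of λh satisfies prox_{λh}(y) = y − P_{S_λ}(y + r), where P_{S_λ} is the Euclidean projection onto the scaled simplex S_λ = {u ∈ ℝ^K : u^(k) ≥ 0 for all k, ∑_{k=1}^K u^(k) = λ}. -/
/-!
A vector `p ∈ S_λ` is a subgradient of `λ h` at `w` as soon as `λ h(w) ≤ ⟨p, w + r⟩`, since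
`⟨p, v + r⟩ ≤ λ h(v)` for every `v`. If `y - w` is a subgradient of a function `g` at `w`, then `w`
minimizes `½‖v - y‖² + g(v)` with quadratic growth, hence uniquely. For `w = y - p` with `p` the
projection of `y + r` onto `S_λ`, the required inequality `λ max_k (y + r - p)_k ≤ ⟨p, y + r - p⟩`
is the variational inequality `⟨y + r - p, q - p⟩ ≤ 0` of the projection, tested at the vertices
`q = λ e_j` of `S_λ`.
-/

open Finset

def scaledSimplex (ι : Type*) [Fintype ι] (lam : ℝ) : Set (ι → ℝ) :=
  {q | (∀ k, 0 ≤ q k) ∧ ∑ k, q k = lam}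

variable {ι : Type*} [Fintype ι]

theorem convex_scaledSimplex (lam : ℝ) : Convex ℝ (scaledSimplex ι lam) := by
  refine fun f hf g hg a b ha hb hab => ⟨fun k => ?_, ?_⟩
  · apply_rules [add_nonneg, mul_nonneg, hf.1, hg.1]
  · simp_rw [Pi.add_apply, Pi.smul_apply, smul_eq_mul]
    rw [sum_add_distrib, ← mul_sum, ← mul_sum, hf.2, hg.2, ← add_mul, hab, one_mul]

theorem single_mem_scaledSimplex [DecidableEq ι] {lam : ℝ} (hlam : 0 ≤ lam) (j : ι) :
    Pi.single j lam ∈ scaledSimplex ι lam :=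
  ⟨fun k => by by_cases h : k = j <;> simp [h, hlam], by simp⟩

theorem sum_sub_mul_sub_nonpos_of_forall_sum_sq_le {C : Set (ι → ℝ)} (hC : Convex ℝ C)
    {z p q : ι → ℝ} (hp : p ∈ C) (hmin : ∀ q ∈ C, ∑ k, (z k - p k) ^ 2 ≤ ∑ k, (z k - q k) ^ 2)
    (hq : q ∈ C) : ∑ k, (z k - p k) * (q k - p k) ≤ 0 := by
  let e := (WithLp.linearEquiv 2 ℝ (ι → ℝ)).symm
  have hnorm (w : ι → ℝ) : ‖e z - e w‖ = √(∑ k, (z k - w k) ^ 2) := by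
    simp [EuclideanSpace.norm_eq, e]
  have hpC : e p ∈ e '' C := Set.mem_image_of_mem e hp
  have : Nonempty (e '' C) := ⟨⟨e p, hpC⟩⟩
  have hbdd : BddBelow (Set.range fun w : e '' C => ‖e z - w‖) := ⟨0, by
    rintro _ ⟨w, rfl⟩
    exact norm_nonneg _⟩
  have hproj : ‖e z - e p‖ = ⨅ w : e '' C, ‖e z - w‖ := by
    refine le_antisymm (le_ciInf ?_) (ciInf_le hbdd ⟨e p, hpC⟩)
    rintro ⟨_, w, hw, rfl⟩
    rw [hnorm, hnorm]
    exact Real.sqrt_le_sqrt (hmin w hw)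
  have hvi := (norm_eq_iInf_iff_real_inner_le_zero (hC.linear_image e.toLinearMap) hpC).1 hproj
    (e q) (Set.mem_image_of_mem e hq)
  simpa [PiLp.inner_apply, e, mul_comm] using hvi

theorem mul_iSup_sub_le_of_forall_sum_sq_le {lam : ℝ} {z p : ι → ℝ}
    (hp : p ∈ scaledSimplex ι lam)
    (hmin : ∀ q ∈ scaledSimplex ι lam, ∑ k, (z k - p k) ^ 2 ≤ ∑ k, (z k - q k) ^ 2) :
    lam * ⨆ k, (z k - p k) ≤ ∑ k, p k * (z k - p k) := by
  classical
  have hlam : 0 ≤ lam := hp.2 ▸ sum_nonneg fun k _ => hp.1 k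
  have hvertex (j : ι) : lam * (z j - p j) ≤ ∑ k, p k * (z k - p k) := by
    have := sum_sub_mul_sub_nonpos_of_forall_sum_sq_le (convex_scaledSimplex lam) hp hmin
      (single_mem_scaledSimplex hlam j)
    simp_rw [mul_sub, sum_sub_distrib, mul_comm (z _ - p _)] at this
    simpa [Pi.single_apply] using this
  rcases isEmpty_or_nonempty ι with hι | hι
  · simp
  · rw [Real.mul_iSup_of_nonneg hlam]
    exact ciSup_le hvertex

theorem sum_mul_le_sum_mul_iSup {p : ι → ℝ} (hp : ∀ k, 0 ≤ p k) (f : ι → ℝ) :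
    ∑ k, p k * f k ≤ (∑ k, p k) * ⨆ k, f k := by
  rw [sum_mul]
  exact sum_le_sum fun k _ =>
    mul_le_mul_of_nonneg_left (le_ciSup (Set.finite_range f).bddAbove k) (hp k)

def HasSubgradientAt (g : (ι → ℝ) → ℝ) (s w : ι → ℝ) : Prop :=
  ∀ v, g w + ∑ k, s k * (v k - w k) ≤ g v

theorem hasSubgradientAt_mul_iSup_add {lam : ℝ} {r p w : ι → ℝ} (hp : p ∈ scaledSimplex ι lam)
    (hw : lam * ⨆ k, (w k + r k) ≤ ∑ k, p k * (w k + r k)) :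
    HasSubgradientAt (fun v => lam * ⨆ k, (v k + r k)) p w := by
  intro v
  have hv := sum_mul_le_sum_mul_iSup hp.1 (fun k => v k + r k)
  have hsplit : ∑ k, p k * (v k - w k) = ∑ k, p k * (v k + r k) - ∑ k, p k * (w k + r k) := by
    rw [← sum_sub_distrib]
    exact sum_congr rfl fun k _ => by ring
  rw [hp.2] at hv
  dsimp only
  linarith

theorem HasSubgradientAt.half_sum_sq_add_le {g : (ι → ℝ) → ℝ} {y w : ι → ℝ}
    (hg : HasSubgradientAt g (y - w) w) (v : ι → ℝ) :
    (1 / 2) * ∑ k, (w k - y k) ^ 2 + g w + (1 / 2) * ∑ k, (v k - w k) ^ 2 ≤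
      (1 / 2) * ∑ k, (v k - y k) ^ 2 + g v := by
  have hsq : ∑ k, (v k - y k) ^ 2 =
      ∑ k, (w k - y k) ^ 2 + ∑ k, (v k - w k) ^ 2 - 2 * ∑ k, (y - w) k * (v k - w k) := by
    rw [mul_sum, ← sum_add_distrib, ← sum_sub_distrib]
    exact sum_congr rfl fun k _ => by simp only [Pi.sub_apply]; ring
  linarith [hg v]

theorem eq_of_sum_sq_sub_nonpos {v w : ι → ℝ} (h : ∑ k, (v k - w k) ^ 2 ≤ 0) : v = w := by
  funext k
  have hzero := (sum_eq_zero_iff_of_nonneg fun k _ => sq_nonneg (v k - w k)).1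
    (le_antisymm h (sum_nonneg fun k _ => sq_nonneg _)) k (mem_univ k)
  exact sub_eq_zero.1 (pow_eq_zero_iff two_ne_zero |>.1 hzero)

theorem prox_of_scaled_max_via_simplex_projection_general
    (K : ℕ) (lam : ℝ)
    (r y p : Fin K → ℝ)
    (hpS : (∀ k, 0 ≤ p k) ∧ ∑ k, p k = lam)
    (hpmin : ∀ q : Fin K → ℝ, ((∀ k, 0 ≤ q k) ∧ ∑ k, q k = lam) →
        ∑ k, ((y k + r k) - p k) ^ 2 ≤ ∑ k, ((y k + r k) - q k) ^ 2) :
    (∀ v : Fin K → ℝ,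
        (1 / 2) * ∑ k, ((y - p) k - y k) ^ 2 + lam * (⨆ k, ((y - p) k + r k)) ≤
        (1 / 2) * ∑ k, (v k - y k) ^ 2 + lam * (⨆ k, (v k + r k))) ∧
    (∀ v : Fin K → ℝ,
        (∀ w : Fin K → ℝ,
          (1 / 2) * ∑ k, (v k - y k) ^ 2 + lam * (⨆ k, (v k + r k)) ≤
          (1 / 2) * ∑ k, (w k - y k) ^ 2 + lam * (⨆ k, (w k + r k))) → v = y - p) := by
  have hsub : HasSubgradientAt (fun v => lam * ⨆ k, (v k + r k)) (y - (y - p)) (y - p) := by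
    rw [sub_sub_cancel]
    refine hasSubgradientAt_mul_iSup_add hpS ?_
    simpa only [Pi.sub_apply, sub_add_eq_add_sub] using
      mul_iSup_sub_le_of_forall_sum_sq_le (z := fun k => y k + r k) hpS hpmin
  have hgrowth := hsub.half_sum_sq_add_le
  refine ⟨fun v => ?_, fun v hv => eq_of_sum_sq_sub_nonpos ?_⟩
  · linarith [hgrowth v, sum_nonneg (s := univ) fun k _ => sq_nonneg (v k - (y - p) k)]
  · linarith [hgrowth v, hv (y - p)]

/-- Proposition 1: For `K ≥ 1`, `λ > 0`, `r ∈ ℝ^K` and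
`h(y) = max_k (y k + r k)`, one has `prox_{λh}(y) = y − P_{S_λ}(y + r)`, where
`P_{S_λ}` is the Euclidean projection onto the scaled simplex
`S_λ = {v : ∀ k, v k ≥ 0, ∑ k, v k = λ}`.  The projection `p = P_{S_λ}(y+r)` is
described by membership in `S_λ` together with minimality of the squared Euclidean
distance, and `prox_{λh}(y) = y - p` is expressed by saying that `y - p` is the
unique minimizer of `v ↦ (1/2)‖v − y‖² + λ h(v)`. -/
theorem prox_of_scaled_max_via_simplex_projection
    (K : ℕ) (hK : 1 ≤ K) (lam : ℝ) (hlam : 0 < lam)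
    (r y p : Fin K → ℝ)
    (hpS : (∀ k, 0 ≤ p k) ∧ ∑ k, p k = lam)
    (hpmin : ∀ q : Fin K → ℝ, ((∀ k, 0 ≤ q k) ∧ ∑ k, q k = lam) →
        ∑ k, ((y k + r k) - p k) ^ 2 ≤ ∑ k, ((y k + r k) - q k) ^ 2) :
    (∀ v : Fin K → ℝ,
        (1 / 2) * ∑ k, ((y - p) k - y k) ^ 2 + lam * (⨆ k, ((y - p) k + r k)) ≤
        (1 / 2) * ∑ k, (v k - y k) ^ 2 + lam * (⨆ k, (v k + r k))) ∧
    (∀ v : Fin K → ℝ,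
        (∀ w : Fin K → ℝ,
          (1 / 2) * ∑ k, (v k - y k) ^ 2 + lam * (⨆ k, (v k + r k)) ≤
          (1 / 2) * ∑ k, (w k - y k) ^ 2 + lam * (⨆ k, (w k + r k))) → v = y - p) :=
  prox_of_scaled_max_via_simplex_projection_general K lam r y p hpS hpmin
end

section
/- (Proposition 2.) Let K ≥ 1, r ∈ ℝ^K, and define h : ℝ^K → ℝ by h(y) = max_{1≤k≤K} (y^(k) + r^(k)). Fix (y, ζ) ∈ ℝ^K × ℝ and let (ν^(1),…,ν^(K)) be the nondecreasing rearrangement of the values (y^(k) + r^(k))_{1≤k≤K}. Then the Euclidean projection of (y, ζ) onto epi h = {(p, θ) : h(p) ≤ θ} equals (p, θ), where θ is determined as follows: there exists a unique integer k̄ ∈ {1,…,K+1} such that θ := (ζ + ∑_{k=k̄}^{K} ν^(k)) / (K − k̄ + 2) satisfies ν^(k̄−1) < θ ≤ ν^(k̄) (with the conventions that the condition ν^(k̄−1) < θ is vacuous when k̄ = 1, the condition θ ≤ ν^(k̄) is vacuous when k̄ = K+1, and the sum ∑_{k=K+1}^{K} is empty); and p^(k) = min{y^(k), θ − r^(k)}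 for every k ∈ {1,…,K}. -/
/-!
Writing `(x)⁺ = max x 0`, the point `(p, θ)` with `p k = min (y k) (θ - r k)` lies in `epi h`, and
`y - p = (y + r - θ)⁺` is supported where the constraint `p k + r k ≤ θ` is active. Hence the
obtuse-angle criterion for projections reduces to the scalar equation `θ - ζ = ∑ₖ (νₖ - θ)⁺`,
whose left side minus right side is continuous and strictly increasing in `θ`, so it has exactly
one root. If `k̄` is the position at which this root is inserted into the sorted list `ν`, the
positive parts are exactly the terms with `k ≥ k̄`, and the equation becomes the closed form
`θ = (ζ + ∑_{k ≥ k̄} νₖ) / (K - k̄ + 2)`.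
-/

open Finset

section ScalarEquation

variable {α : Type*} (s : Finset α) (f : α → ℝ)

lemma antitone_sum_max_sub_zero : Antitone fun θ : ℝ => ∑ k ∈ s, max (f k - θ) 0 :=
  fun _ _ h => sum_le_sum fun _ _ => max_le_max (by linarith) le_rfl

lemma strictMono_sub_sum_max_sub_zero : StrictMono fun θ : ℝ => θ - ∑ k ∈ s, max (f k - θ) 0 :=
  fun _ _ h => by
    have := antitone_sum_max_sub_zero s f h.le
    simp only at this ⊢
    linarith

lemma existsUnique_sub_eq_sum_max_sub_zero (ζ : ℝ) :
    ∃! θ : ℝ, θ - ζ = ∑ k ∈ s, max (f k - θ) 0 := by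
  set g : ℝ → ℝ := fun θ => θ - ∑ k ∈ s, max (f k - θ) 0
  -- at `b` the sum is at most its value at `ζ`, which is `b - ζ`
  set b := ζ + ∑ k ∈ s, max (f k - ζ) 0
  have hζb : ζ ≤ b := le_add_of_nonneg_right (sum_nonneg fun _ _ => le_max_right _ _)
  have hgζ : g ζ ≤ ζ := sub_le_self _ (sum_nonneg fun _ _ => le_max_right _ _)
  have hgb : ζ ≤ g b := by
    have := antitone_sum_max_sub_zero s f hζb
    simp only [g, b] at this ⊢
    linarith
  obtain ⟨θ, -, hθ⟩ := intermediate_value_Icc hζb (by fun_prop : Continuous g).continuousOn ⟨hgζ, hgb⟩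
  refine ⟨θ, by simp only [g] at hθ; linarith, fun θ' hθ' => ?_⟩
  exact (strictMono_sub_sum_max_sub_zero s f).injective (by simp only [g] at hθ ⊢; linarith)

end ScalarEquation

section InsertionIndex

variable {ν : ℕ → ℝ} {K : ℕ}

/-- `kbar ∈ {1, …, K+1}` is the position at which `θ` is inserted into `ν 1 ≤ … ≤ ν K`,
i.e. `ν (kbar - 1) < θ ≤ ν kbar` with the conventions `ν 0 = -∞` and `ν (K+1) = +∞`. -/
def IsInsertionIndex (ν : ℕ → ℝ) (K : ℕ) (θ : ℝ) (kbar : ℕ) : Prop :=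
  (1 ≤ kbar ∧ kbar ≤ K + 1) ∧ (2 ≤ kbar → ν (kbar - 1) < θ) ∧ (kbar ≤ K → θ ≤ ν kbar)

lemma exists_isInsertionIndex (ν : ℕ → ℝ) (K : ℕ) (θ : ℝ) :
    ∃ kbar, IsInsertionIndex ν K θ kbar := by
  classical
  have hex : ∃ m, K ≤ m ∨ θ ≤ ν (m + 1) := ⟨K, Or.inl le_rfl⟩
  refine ⟨Nat.find hex + 1, ⟨le_add_self, ?_⟩, fun h2 => ?_, fun hle => ?_⟩
  · have := Nat.find_min' hex (Or.inl le_rfl : K ≤ K ∨ θ ≤ ν (K + 1))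
    omega
  · have hmin := Nat.find_min hex (m := Nat.find hex - 1) (by omega)
    rw [not_or, not_le] at hmin
    simpa [Nat.sub_add_cancel (by omega : 1 ≤ Nat.find hex)] using hmin.2
  · exact (Nat.find_spec hex).resolve_left (by omega)

variable (hmono : ∀ i j, 1 ≤ i → i ≤ j → j ≤ K → ν i ≤ ν j)
include hmono

lemma IsInsertionIndex.unique {θ : ℝ} {a b : ℕ} (ha : IsInsertionIndex ν K θ a)
    (hb : IsInsertionIndex ν K θ b) : a = b := by
  obtain ⟨⟨ha1, ha2⟩, halo, hahi⟩ := ha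
  obtain ⟨⟨hb1, hb2⟩, hblo, hbhi⟩ := hb
  rcases Nat.lt_trichotomy a b with h | h | h
  · linarith [hahi (by omega), hblo (by omega), hmono a (b - 1) ha1 (by omega) (by omega)]
  · exact h
  · linarith [hbhi (by omega), halo (by omega), hmono b (a - 1) hb1 (by omega) (by omega)]

lemma IsInsertionIndex.sum_max_sub_zero_eq {θ : ℝ} {kbar : ℕ} (h : IsInsertionIndex ν K θ kbar) :
    ∑ k ∈ Icc 1 K, max (ν k - θ) 0 = ∑ k ∈ Icc kbar K, (ν k - θ) := by
  obtain ⟨⟨h1, h2⟩, hlo, hhi⟩ := h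
  have hsplit : Icc 1 K = Icc 1 (kbar - 1) ∪ Icc kbar K := by
    ext x; simp only [mem_union, mem_Icc]; omega
  have hdisj : Disjoint (Icc 1 (kbar - 1)) (Icc kbar K) := by
    rw [disjoint_left]; intro x hx hx'; simp only [mem_Icc] at hx hx'; omega
  have hbelow : ∑ k ∈ Icc 1 (kbar - 1), max (ν k - θ) 0 = 0 := by
    refine sum_eq_zero fun k hk => max_eq_right ?_
    rw [mem_Icc] at hk
    linarith [hlo (by omega), hmono k (kbar - 1) hk.1 hk.2 (by omega)]
  rw [hsplit, sum_union hdisj, hbelow, zero_add]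
  refine sum_congr rfl fun k hk => max_eq_left ?_
  rw [mem_Icc] at hk
  linarith [hhi (by omega), hmono kbar k h1 hk.1 hk.2]

lemma IsInsertionIndex.sub_eq_sum_max_sub_zero_iff {ζ θ : ℝ} {kbar : ℕ}
    (h : IsInsertionIndex ν K θ kbar) :
    θ - ζ = ∑ k ∈ Icc 1 K, max (ν k - θ) 0 ↔
      θ = (ζ + ∑ k ∈ Icc kbar K, ν k) / ((K + 2 - kbar : ℕ) : ℝ) := by
  have hcard : ((K + 2 - kbar : ℕ) : ℝ) = (#(Icc kbar K) : ℝ) + 1 := by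
    rw [Nat.card_Icc]; norm_cast; have := h.1; omega
  rw [h.sum_max_sub_zero_eq hmono, sum_sub_distrib, sum_const, nsmul_eq_mul,
    eq_div_iff (by rw [hcard]; positivity), hcard]
  constructor <;> intro h <;> linarith

end InsertionIndex

section Projection

variable {ι : Type*} (r y : ι → ℝ) {θ : ℝ}

lemma ciSup_min_sub_add_le [Nonempty ι] : (⨆ i, (min (y i) (θ - r i) + r i)) ≤ θ :=
  ciSup_le fun i => by linarith [min_le_right (y i) (θ - r i)]

lemma sub_min_sub_eq_max (i : ι) : y i - min (y i) (θ - r i) = max (y i + r i - θ) 0 := by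
  rcases le_total (y i) (θ - r i) with h | h
  · rw [min_eq_left h, max_eq_right (by linarith), sub_self]
  · rw [min_eq_right h, max_eq_left (by linarith)]; ring

/-- The obtuse-angle criterion for the points `u = (y, ζ)`, `p = (p, θ)`, `q = (q, τ)`:
`⟪u - p, q - p⟫ ≤ 0` implies `‖p - u‖ ≤ ‖q - u‖`. -/
lemma sum_sq_add_sq_le_of_sum_mul_le [Fintype ι] (p q : ι → ℝ) (ζ τ : ℝ)
    (h : ∑ i, (y i - p i) * (q i - p i) ≤ (θ - ζ) * (τ - θ)) :
    ∑ i, (p i - y i) ^ 2 + (θ - ζ) ^ 2 ≤ ∑ i, (q i - y i) ^ 2 + (τ - ζ) ^ 2 := by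
  have hexpand : ∑ i, (q i - y i) ^ 2 = ∑ i, (p i - y i) ^ 2 + ∑ i, (q i - p i) ^ 2
      - 2 * ∑ i, (y i - p i) * (q i - p i) := by
    rw [← sum_add_distrib, mul_sum, ← sum_sub_distrib]
    exact sum_congr rfl fun i _ => by ring
  have hsq : 0 ≤ ∑ i, (q i - p i) ^ 2 := sum_nonneg fun i _ => sq_nonneg _
  nlinarith [sq_nonneg (τ - θ)]

lemma sum_sq_min_sub_add_sq_le [Fintype ι] {ζ : ℝ} (hθ : θ - ζ = ∑ i, max (y i + r i - θ) 0)
    (q : ι → ℝ) (τ : ℝ) (hq : ∀ i, q i + r i ≤ τ) :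
    ∑ i, (min (y i) (θ - r i) - y i) ^ 2 + (θ - ζ) ^ 2 ≤ ∑ i, (q i - y i) ^ 2 + (τ - ζ) ^ 2 := by
  set p : ι → ℝ := fun i => min (y i) (θ - r i)
  refine sum_sq_add_sq_le_of_sum_mul_le y p q ζ τ ?_
  have hterm (i : ι) : (y i - p i) * (q i - p i) ≤ (y i - p i) * (τ - θ) := by
    rcases le_total (y i) (θ - r i) with h | h
    · simp [p, min_eq_left h]
    · have hp : p i = θ - r i := min_eq_right h
      exact mul_le_mul_of_nonneg_left (by linarith [hq i]) (by linarith)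
  calc ∑ i, (y i - p i) * (q i - p i) ≤ ∑ i, (y i - p i) * (τ - θ) := sum_le_sum fun i _ => hterm i
    _ = (θ - ζ) * (τ - θ) := by rw [← sum_mul, hθ]; simp only [p, sub_min_sub_eq_max]

end Projection

lemma sum_Icc_one_eq_sum_of_perm {K : ℕ} (ν : ℕ → ℝ) (f : Fin K → ℝ) (σ : Equiv.Perm (Fin K))
    (hσ : ∀ k : Fin K, ν (k.1 + 1) = f (σ k)) (g : ℝ → ℝ) :
    ∑ k ∈ Icc 1 K, g (ν k) = ∑ i, g (f i) := by
  have hshift : ∑ k ∈ Icc 1 K, g (ν k) = ∑ k : Fin K, g (ν (k.1 + 1)) := by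
    rw [Fin.sum_univ_eq_sum_range (fun i => g (ν (i + 1))), range_eq_Ico,
      sum_Ico_add' (fun k => g (ν k)) 0 K 1]
    rfl
  rw [hshift]
  simp only [hσ]
  exact Equiv.sum_comp σ (fun i => g (f i))

/-- Proposition 2: Closed form of the Euclidean projection of `(y, ζ)`
onto the epigraph of `h(p) = max_k (p k + r k)`.  The sorted values
`ν 1 ≤ … ≤ ν K` (indexed by `1,…,K`) form the nondecreasing rearrangement of
`(y k + r k)_k`.  There is a unique `k̄ ∈ {1,…,K+1}` such that
`θ = (ζ + ∑_{k=k̄}^K ν k) / (K − k̄ + 2)` satisfies `ν (k̄−1) < θ ≤ ν k̄` (lower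
condition vacuous for `k̄ = 1`, upper one for `k̄ = K+1`), and for this `k̄` the
projection equals `(p, θ)` with `p k = min (y k) (θ − r k)`; the projection is
expressed by membership in the epigraph together with minimality of the squared
Euclidean distance on `ℝ^K × ℝ`. -/
theorem projection_onto_epigraph_of_max_closed_form
    (K : ℕ) (hK : 1 ≤ K) (r y : Fin K → ℝ) (ζ : ℝ) (ν : ℕ → ℝ)
    -- `ν 1, …, ν K` is the nondecreasing rearrangement of `(y k + r k)_k`
    (hmono : ∀ i j, 1 ≤ i → i ≤ j → j ≤ K → ν i ≤ ν j)
    (hperm : ∃ σ : Equiv.Perm (Fin K), ∀ k : Fin K, ν (k.1 + 1) = y (σ k) + r (σ k)) :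
    (∃! kbar : ℕ,
        (1 ≤ kbar ∧ kbar ≤ K + 1) ∧
        (2 ≤ kbar →
          ν (kbar - 1) <
            (ζ + ∑ k ∈ Finset.Icc kbar K, ν k) / ((K + 2 - kbar : ℕ) : ℝ)) ∧
        (kbar ≤ K →
          (ζ + ∑ k ∈ Finset.Icc kbar K, ν k) / ((K + 2 - kbar : ℕ) : ℝ) ≤ ν kbar)) ∧
    ∀ kbar : ℕ, (1 ≤ kbar ∧ kbar ≤ K + 1) →
      (2 ≤ kbar →
        ν (kbar - 1) < (ζ + ∑ k ∈ Finset.Icc kbar K, ν k) / ((K + 2 - kbar : ℕ) : ℝ)) →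
      (kbar ≤ K →
        (ζ + ∑ k ∈ Finset.Icc kbar K, ν k) / ((K + 2 - kbar : ℕ) : ℝ) ≤ ν kbar) →
      (let θ : ℝ := (ζ + ∑ k ∈ Finset.Icc kbar K, ν k) / ((K + 2 - kbar : ℕ) : ℝ)
       let p : Fin K → ℝ := fun k => min (y k) (θ - r k)
       -- `(p, θ)` lies in `epi h` and minimizes the squared distance to `(y, ζ)`
       (⨆ k, (p k + r k)) ≤ θ ∧
       ∀ (q : Fin K → ℝ) (τ : ℝ), (⨆ k, (q k + r k)) ≤ τ →
         (∑ k, (p k - y k) ^ 2) + (θ - ζ) ^ 2 ≤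
         (∑ k, (q k - y k) ^ 2) + (τ - ζ) ^ 2) := by
  obtain ⟨σ, hσ⟩ := hperm
  have : Nonempty (Fin K) := ⟨⟨0, hK⟩⟩
  set cand : ℕ → ℝ := fun kbar => (ζ + ∑ k ∈ Icc kbar K, ν k) / ((K + 2 - kbar : ℕ) : ℝ)
  obtain ⟨θ, hθ, hθ_unique⟩ := existsUnique_sub_eq_sum_max_sub_zero (Icc 1 K) ν ζ
  have hcand (kbar : ℕ) (h : IsInsertionIndex ν K (cand kbar) kbar) : cand kbar = θ :=
    hθ_unique _ ((h.sub_eq_sum_max_sub_zero_iff hmono).mpr rfl)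
  obtain ⟨kbar, hkbar⟩ := exists_isInsertionIndex ν K θ
  have hθ_eq : θ = cand kbar := (hkbar.sub_eq_sum_max_sub_zero_iff hmono).mp hθ
  refine ⟨⟨kbar, ?_, fun k hk => ?_⟩, ?_⟩
  · rw [hθ_eq] at hkbar
    exact hkbar
  · have hkθ : IsInsertionIndex ν K θ k := by rw [← hcand k hk]; exact hk
    exact hkθ.unique hmono hkbar
  intro k h1 h2 h3
  have hk : cand k = θ := hcand k ⟨h1, h2, h3⟩
  have hroot : cand k - ζ = ∑ i, max (y i + r i - cand k) 0 := by
    rw [hk, hθ, sum_Icc_one_eq_sum_of_perm ν (fun i => y i + r i) σ hσ (fun x => max (x - θ) 0)]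
  exact ⟨ciSup_min_sub_add_le r y, fun q τ hqτ => sum_sq_min_sub_add_sq_le r y hroot q τ
    ((ciSup_le_iff (Finite.bddAbove_range _)).mp hqτ)⟩
end

section
/- Let K ≥ 1, r ∈ ℝ^K, and define h : ℝ^K → ℝ by h(y) = max_{1≤k≤K} (y^(k) + r^(k)). Fix (y, ζ) ∈ ℝ^K × ℝ and define φ : ℝ → ℝ by φ(v) = (1/2) ∑_{k=1}^K (max{y^(k) + r^(k) − v, 0})². Then the Euclidean projection of (y, ζ) onto epi h = {(p, θ) : h(p) ≤ θ} equals (p, θ) where θ = prox_φ(ζ) and p^(k) = min{y^(k), θ − r^(k)} for every k ∈ {1,…,K}. -/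
/-!
For a fixed level `τ`, minimizing `∑ k, (q k - y k) ^ 2` over the box `q k + r k ≤ τ` is solved
coordinatewise by clipping, `q k = min (y k) (τ - r k)`, with minimal value
`∑ k, max (y k + r k - τ) 0 ^ 2`. Hence projecting `(y, ζ)` onto the epigraph reduces to
minimizing `(1/2)(τ - ζ)² + φ(τ)` over `τ`, whose minimizer is `prox_φ(ζ)`.
-/

open Finset

theorem sq_min_sub_self_eq_sq_max (y r θ : ℝ) :
    (min y (θ - r) - y) ^ 2 = max (y + r - θ) 0 ^ 2 := by
  rcases le_total y (θ - r) with h | h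
  · rw [min_eq_left h, max_eq_right (by linarith)]
    ring
  · rw [min_eq_right h, max_eq_left (by linarith)]
    ring

theorem sq_max_le_sq_sub_of_add_le {q r y τ : ℝ} (h : q + r ≤ τ) :
    max (y + r - τ) 0 ^ 2 ≤ (q - y) ^ 2 := by
  calc max (y + r - τ) 0 ^ 2 ≤ |q - y| ^ 2 := by
        gcongr
        exact max_le (by linarith [neg_abs_le (q - y)]) (abs_nonneg _)
    _ = (q - y) ^ 2 := sq_abs _

section Clipping

variable {ι : Type*} [Fintype ι] (r y : ι → ℝ)

theorem sum_sq_clip_sub_eq (θ : ℝ) :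
    ∑ k, (min (y k) (θ - r k) - y k) ^ 2 = ∑ k, max (y k + r k - θ) 0 ^ 2 :=
  sum_congr rfl fun k _ => sq_min_sub_self_eq_sq_max (y k) (r k) θ

theorem sum_sq_max_le_sum_sq_sub {q : ι → ℝ} {τ : ℝ} (h : ∀ k, q k + r k ≤ τ) :
    ∑ k, max (y k + r k - τ) 0 ^ 2 ≤ ∑ k, (q k - y k) ^ 2 :=
  sum_le_sum fun k _ => sq_max_le_sq_sub_of_add_le (h k)

end Clipping

/-- The Euclidean projection of `(y, ζ)` onto the epigraph of
`h(p) = max_k (p k + r k)` equals `(p, θ)` where `θ = prox_φ(ζ)` for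
`φ(v) = (1/2) ∑ k, (max {y k + r k − v, 0})²` and `p k = min (y k) (θ − r k)`.
The relation `θ = prox_φ(ζ)` is expressed by `θ` minimizing
`v ↦ (1/2)(v − ζ)² + φ(v)` (its minimizer is unique), and the projection is expressed
by epigraph membership together with minimality of the squared Euclidean distance. -/
theorem projection_onto_epigraph_of_max_via_prox
    (K : ℕ) (hK : 1 ≤ K) (r y : Fin K → ℝ) (ζ θ : ℝ)
    -- `θ = prox_φ(ζ)`
    (hθ : ∀ v : ℝ,
        (1 / 2) * (θ - ζ) ^ 2 + (1 / 2) * ∑ k, (max (y k + r k - θ) 0) ^ 2 ≤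
        (1 / 2) * (v - ζ) ^ 2 + (1 / 2) * ∑ k, (max (y k + r k - v) 0) ^ 2) :
    (let p : Fin K → ℝ := fun k => min (y k) (θ - r k)
     (⨆ k, (p k + r k)) ≤ θ ∧
     ∀ (q : Fin K → ℝ) (τ : ℝ), (⨆ k, (q k + r k)) ≤ τ →
       (∑ k, (p k - y k) ^ 2) + (θ - ζ) ^ 2 ≤
       (∑ k, (q k - y k) ^ 2) + (τ - ζ) ^ 2) := by
  intro p
  have : Nonempty (Fin K) := ⟨⟨0, hK⟩⟩
  refine ⟨ciSup_le fun k => by linarith [min_le_right (y k) (θ - r k)], fun q τ hq => ?_⟩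
  have hq_box : ∀ k, q k + r k ≤ τ :=
    (ciSup_le_iff (Set.finite_range fun k => q k + r k).bddAbove).1 hq
  have h_clip := sum_sq_clip_sub_eq r y θ
  have h_box := sum_sq_max_le_sum_sq_sub r y hq_box
  linarith [hθ τ]
end

section
/- Let K ≥ 1, let ν = (ν^(1),…,ν^(K)) ∈ ℝ^K be nondecreasing, and let ζ ∈ ℝ. Then there exists exactly one integer k̄ ∈ {1,…,K+1} such that the number θ := (ζ + ∑_{k=k̄}^{K} ν^(k)) / (K − k̄ + 2) satisfies ν^(k̄−1) < θ ≤ ν^(k̄), where the lower condition is vacuous for k̄ = 1, the upper condition is vacuous for k̄ = K+1, and ∑_{k=K+1}^{K} denotes the empty sum. Moreover, for this k̄ the resulting θ satisfies θ − ∑_{k=1}^K max{ν^(k) − θ, 0} = ζ. -/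
/-!
For `k ∈ {1, …, K+1}` write `θₖ = (ζ + ∑_{j ≥ k} ν j) / (K + 2 - k)`. Since `θₖ` is the mean
of `ν k` and `K + 1 - k` copies of `θₖ₊₁`, the condition `ν k < θₖ` is equivalent to
`ν k < θₖ₊₁`; hence the least `k` with `θₖ ≤ ν k` (or `K + 1` if there is none) is a
breakpoint. At a breakpoint exactly the coordinates `ν k, …, ν K` lie at or above `θₖ`, which turns
`θ - ∑ max (ν j - θ) 0 = ζ` into the linear equation defining `θₖ`. The left-hand side is
strictly increasing in `θ`, so all breakpoints share one level, and the monotonicity of `ν`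
then forces them to coincide.
-/

open Finset

theorem strictMono_sub_sum_max_sub {ι α : Type*} [AddCommGroup α] [LinearOrder α]
    [IsOrderedAddMonoid α] (s : Finset ι) (f : ι → α) :
    StrictMono fun θ => θ - ∑ i ∈ s, max (f i - θ) 0 := by
  intro a b hab
  have hsum : ∑ i ∈ s, max (f i - b) 0 ≤ ∑ i ∈ s, max (f i - a) 0 :=
    sum_le_sum fun i _ => max_le_max_right 0 (sub_le_sub_left hab.le (f i))
  exact (sub_lt_sub_right hab _).trans_le (sub_le_sub_left hsum b)

theorem sum_Icc_max_sub_eq_sum_Icc_sub {K k : ℕ} {ν : ℕ → ℝ} {θ : ℝ}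
    (hmono : MonotoneOn ν (Set.Icc 1 K)) (hk₁ : 1 ≤ k) (hk₂ : k ≤ K + 1)
    (hlow : 2 ≤ k → ν (k - 1) < θ) (hup : k ≤ K → θ ≤ ν k) :
    ∑ j ∈ Icc 1 K, max (ν j - θ) 0 = ∑ j ∈ Icc k K, (ν j - θ) := by
  rw [← Ico_add_one_right_eq_Icc 1 K, ← sum_Ico_consecutive _ hk₁ hk₂,
    Ico_add_one_right_eq_Icc k K]
  have below : ∑ j ∈ Ico 1 k, max (ν j - θ) 0 = 0 := by
    refine sum_eq_zero fun j hj => max_eq_right ?_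
    obtain ⟨hj₁, hjk⟩ := mem_Ico.1 hj
    have : ν j ≤ ν (k - 1) :=
      hmono ⟨hj₁, by omega⟩ ⟨by omega, by omega⟩ (by omega)
    linarith [hlow (by omega)]
  have above : ∑ j ∈ Icc k K, max (ν j - θ) 0 = ∑ j ∈ Icc k K, (ν j - θ) := by
    refine sum_congr rfl fun j hj => max_eq_left ?_
    obtain ⟨hkj, hjK⟩ := mem_Icc.1 hj
    have : ν k ≤ ν j := hmono ⟨hk₁, by omega⟩ ⟨by omega, hjK⟩ hkj
    linarith [hup (by omega)]
  rw [below, above, zero_add]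

section Breakpoint

variable (K : ℕ) (ν : ℕ → ℝ) (ζ : ℝ)

noncomputable def breakpointLevel (k : ℕ) : ℝ :=
  (ζ + ∑ j ∈ Icc k K, ν j) / ((K + 2 - k : ℕ) : ℝ)

def IsBreakpoint (k : ℕ) : Prop :=
  (1 ≤ k ∧ k ≤ K + 1) ∧ (2 ≤ k → ν (k - 1) < breakpointLevel K ν ζ k) ∧
    (k ≤ K → breakpointLevel K ν ζ k ≤ ν k)

variable {K ν ζ}

theorem breakpointLevel_mul_card_add_one {k : ℕ} (hk : k ≤ K + 1) :
    breakpointLevel K ν ζ k * ((#(Icc k K) : ℝ) + 1) = ζ + ∑ j ∈ Icc k K, ν j := by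
  have hcard : ((#(Icc k K) : ℝ) + 1) = ((K + 2 - k : ℕ) : ℝ) := by
    rw [Nat.card_Icc]; norm_cast; omega
  rw [hcard, breakpointLevel, div_mul_cancel₀]
  exact_mod_cast (by omega : K + 2 - k ≠ 0)

theorem lt_breakpointLevel_succ {k : ℕ} (hk : k ≤ K) (h : ν k < breakpointLevel K ν ζ k) :
    ν k < breakpointLevel K ν ζ (k + 1) := by
  have hsplit : ∑ j ∈ Icc k K, ν j = ν k + ∑ j ∈ Icc (k + 1) K, ν j := by
    rw [Icc_add_one_left_eq_Ioc, add_sum_Ioc_eq_sum_Icc hk]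
  have hcard : (#(Icc k K) : ℝ) = #(Icc (k + 1) K) + 1 := by
    rw [Nat.card_Icc, Nat.card_Icc]; norm_cast; omega
  have hlevel := breakpointLevel_mul_card_add_one (ν := ν) (ζ := ζ) (by omega : k ≤ K + 1)
  have hlevel_succ := breakpointLevel_mul_card_add_one (ν := ν) (ζ := ζ) (by omega : k + 1 ≤ K + 1)
  rw [hsplit, hcard] at hlevel
  set n : ℝ := #(Icc (k + 1) K) + 1
  have hn : 0 < n := by positivity
  have hscaled : ν k * n < breakpointLevel K ν ζ k * n := mul_lt_mul_of_pos_right h hn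
  refine lt_of_mul_lt_mul_right ?_ hn.le
  linarith

theorem IsBreakpoint.level_sub_sum_max_eq {k : ℕ} (hmono : MonotoneOn ν (Set.Icc 1 K))
    (hk : IsBreakpoint K ν ζ k) :
    breakpointLevel K ν ζ k - ∑ j ∈ Icc 1 K, max (ν j - breakpointLevel K ν ζ k) 0 = ζ := by
  obtain ⟨⟨hk₁, hk₂⟩, hlow, hup⟩ := hk
  rw [sum_Icc_max_sub_eq_sum_Icc_sub hmono hk₁ hk₂ hlow hup, sum_sub_distrib, sum_const,
    nsmul_eq_mul]
  linear_combination breakpointLevel_mul_card_add_one (ν := ν) (ζ := ζ) hk₂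

theorem exists_isBreakpoint : ∃ k, IsBreakpoint K ν ζ k := by
  classical
  have hP : ∃ k, 1 ≤ k ∧ (k ≤ K → breakpointLevel K ν ζ k ≤ ν k) :=
    ⟨K + 1, by omega, fun h => by omega⟩
  obtain ⟨hk₁, hup⟩ := Nat.find_spec hP
  have hk₂ : Nat.find hP ≤ K + 1 := Nat.find_min' hP ⟨by omega, fun h => by omega⟩
  refine ⟨Nat.find hP, ⟨hk₁, hk₂⟩, fun h2 => ?_, hup⟩
  have hprev : ν (Nat.find hP - 1) < breakpointLevel K ν ζ (Nat.find hP - 1) := by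
    have hnot := Nat.find_min hP (m := Nat.find hP - 1) (by omega)
    exact not_le.1 fun h => hnot ⟨by omega, fun _ => h⟩
  have := lt_breakpointLevel_succ (by omega) hprev
  rwa [Nat.sub_add_cancel (by omega)] at this

theorem IsBreakpoint.le_of_isBreakpoint {a b : ℕ} (hmono : MonotoneOn ν (Set.Icc 1 K))
    (ha : IsBreakpoint K ν ζ a) (hb : IsBreakpoint K ν ζ b) : a ≤ b := by
  by_contra! hba
  have hlevel : breakpointLevel K ν ζ a = breakpointLevel K ν ζ b :=
    (strictMono_sub_sum_max_sub (Icc 1 K) ν).injective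
      ((ha.level_sub_sum_max_eq hmono).trans (hb.level_sub_sum_max_eq hmono).symm)
  obtain ⟨⟨ha₁, ha₂⟩, hlow_a, -⟩ := ha
  obtain ⟨⟨hb₁, -⟩, -, hup_b⟩ := hb
  have : ν b ≤ ν (a - 1) := hmono ⟨hb₁, by omega⟩ ⟨by omega, by omega⟩ (by omega)
  linarith [hlow_a (by omega), hup_b (by omega)]

end Breakpoint

theorem unique_breakpoint_index_and_root_general
    (K : ℕ) (ν : ℕ → ℝ)
    (hmono : ∀ i j, 1 ≤ i → i ≤ j → j ≤ K → ν i ≤ ν j) (ζ : ℝ) :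
    (∃! kbar : ℕ,
        (1 ≤ kbar ∧ kbar ≤ K + 1) ∧
        (2 ≤ kbar →
          ν (kbar - 1) <
            (ζ + ∑ k ∈ Finset.Icc kbar K, ν k) / ((K + 2 - kbar : ℕ) : ℝ)) ∧
        (kbar ≤ K →
          (ζ + ∑ k ∈ Finset.Icc kbar K, ν k) / ((K + 2 - kbar : ℕ) : ℝ) ≤ ν kbar)) ∧
    ∀ kbar : ℕ, (1 ≤ kbar ∧ kbar ≤ K + 1) →
      (2 ≤ kbar →
        ν (kbar - 1) < (ζ + ∑ k ∈ Finset.Icc kbar K, ν k) / ((K + 2 - kbar : ℕ) : ℝ)) →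
      (kbar ≤ K →
        (ζ + ∑ k ∈ Finset.Icc kbar K, ν k) / ((K + 2 - kbar : ℕ) : ℝ) ≤ ν kbar) →
      (let θ : ℝ := (ζ + ∑ k ∈ Finset.Icc kbar K, ν k) / ((K + 2 - kbar : ℕ) : ℝ)
       θ - ∑ k ∈ Finset.Icc 1 K, max (ν k - θ) 0 = ζ) := by
  have hmono' : MonotoneOn ν (Set.Icc 1 K) := fun i hi j hj hij => hmono i j hi.1 hij hj.2
  obtain ⟨k, hk⟩ := exists_isBreakpoint (K := K) (ν := ν) (ζ := ζ)
  refine ⟨⟨k, hk, fun j (hj : IsBreakpoint K ν ζ j) =>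
    (hj.le_of_isBreakpoint hmono' hk).antisymm (hk.le_of_isBreakpoint hmono' hj)⟩, ?_⟩
  intro kbar hrange hlow hup
  exact IsBreakpoint.level_sub_sum_max_eq hmono' ⟨hrange, hlow, hup⟩

/-- Combinatorial step of the closed-form epigraphical projection.
Given a nondecreasing tuple `ν 1 ≤ … ≤ ν K` (indexed by `1,…,K`) and `ζ ∈ ℝ`, there
is exactly one `k̄ ∈ {1,…,K+1}` such that `θ = (ζ + ∑_{k=k̄}^K ν k) / (K − k̄ + 2)`
satisfies `ν (k̄−1) < θ ≤ ν k̄` (lower condition vacuous for `k̄ = 1`, upper one for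
`k̄ = K+1`); moreover, for this `k̄` the resulting `θ` satisfies
`θ − ∑_{k=1}^K max {ν k − θ, 0} = ζ`. -/
theorem unique_breakpoint_index_and_root
    (K : ℕ) (hK : 1 ≤ K) (ν : ℕ → ℝ)
    (hmono : ∀ i j, 1 ≤ i → i ≤ j → j ≤ K → ν i ≤ ν j) (ζ : ℝ) :
    (∃! kbar : ℕ,
        (1 ≤ kbar ∧ kbar ≤ K + 1) ∧
        (2 ≤ kbar →
          ν (kbar - 1) <
            (ζ + ∑ k ∈ Finset.Icc kbar K, ν k) / ((K + 2 - kbar : ℕ) : ℝ)) ∧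
        (kbar ≤ K →
          (ζ + ∑ k ∈ Finset.Icc kbar K, ν k) / ((K + 2 - kbar : ℕ) : ℝ) ≤ ν kbar)) ∧
    ∀ kbar : ℕ, (1 ≤ kbar ∧ kbar ≤ K + 1) →
      (2 ≤ kbar →
        ν (kbar - 1) < (ζ + ∑ k ∈ Finset.Icc kbar K, ν k) / ((K + 2 - kbar : ℕ) : ℝ)) →
      (kbar ≤ K →
        (ζ + ∑ k ∈ Finset.Icc kbar K, ν k) / ((K + 2 - kbar : ℕ) : ℝ) ≤ ν kbar) →
      (let θ : ℝ := (ζ + ∑ k ∈ Finset.Icc kbar K, ν k) / ((K + 2 - kbar : ℕ) : ℝ)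
       θ - ∑ k ∈ Finset.Icc 1 K, max (ν k - θ) 0 = ζ) :=
  unique_breakpoint_index_and_root_general K ν hmono ζ
end
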